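/- arXiv:1301.5310 — 3 statements merged into one kernel-verified Lean document; each statement's English description precedes it below -/
import Mathlib

section
/- Let |φ_0000⟩ ∈ ℂ^16 be the 4-qubit linear cluster state and |φ_1110⟩ = Z₁Z₂Z₃|φ_0000⟩. Then the eigenspace {ψ ∈ ℂ^16 : B₁^φ ψ = 4ψ} of the Bell operator B₁^φ = XIXZ + XIYY + ZYYZ − ZYXY for its algebraically maximal eigenvalue 4 is exactly the two-dimensional span of |φ_0000⟩ and |φ_1110⟩; in particular every superposition α|φ_0000⟩ + β|φ_1110⟩ attains ⟨B₁^φ⟩ = 4. -/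
open Matrix

/-- Pauli X matrix on a single qubit (basis indexed by `Bool`). -/
noncomputable def pX : Matrix Bool Bool ℂ := Matrix.of fun b c => if b = c then 0 else 1

/-- Pauli Y matrix on a single qubit. -/
noncomputable def pY : Matrix Bool Bool ℂ :=
  Matrix.of fun b c => if b = c then 0 else if b then Complex.I else -Complex.I

/-- Pauli Z matrix on a single qubit. -/
noncomputable def pZ : Matrix Bool Bool ℂ :=
  Matrix.of fun b c => if b = c then (if b then -1 else 1) else 0

/-- Tensor product of single-qubit matrices, as an operator on the `n`-qubit space
`(Fin n → Bool) → ℂ ≅ ℂ^(2^n)`. -/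
noncomputable def tensorOp {n : ℕ} (M : Fin n → Matrix Bool Bool ℂ) :
    Matrix (Fin n → Bool) (Fin n → Bool) ℂ :=
  Matrix.of fun f g => ∏ i, M i (f i) (g i)

/-- The 4-qubit linear cluster state `|φ_0000⟩` (graph state of the path `1–2–3–4`):
amplitude `(1/4)·(−1)^(f(1)f(2)+f(2)f(3)+f(3)f(4))` at `|f⟩`. -/
noncomputable def cluster4 : (Fin 4 → Bool) → ℂ := fun f =>
  (1 / 4 : ℂ) * (if f 0 && f 1 then -1 else 1) * (if f 1 && f 2 then -1 else 1)
    * (if f 2 && f 3 then -1 else 1)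

/-- `|φ_1110⟩ = Z₁Z₂Z₃|φ_0000⟩`. -/
noncomputable def cluster4_1110 : (Fin 4 → Bool) → ℂ :=
  Matrix.mulVec (tensorOp ![pZ, pZ, pZ, 1]) cluster4

/-- The Bell operator `B₁^φ = XIXZ + XIYY + ZYYZ − ZYXY`. -/
noncomputable def bellB1 : Matrix (Fin 4 → Bool) (Fin 4 → Bool) ℂ :=
  tensorOp ![pX, 1, pX, pZ] + tensorOp ![pX, 1, pY, pY]
    + tensorOp ![pZ, pY, pY, pZ] - tensorOp ![pZ, pY, pX, pY]

open scoped ComplexOrder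

/-! `B₁^φ` is the sum of the four Hermitian involutions `XIXZ`, `XIYY`, `ZYYZ`, `−ZYXY`
(stabilizers of the cluster state). For such an `S`, `⟨ψ, (1 − S)ψ⟩ = ‖(1 − S)ψ‖² / 2 ≥ 0`,
so `B₁^φ ψ = 4ψ` forces each of them to fix `ψ`.
Each one is a phase times the bit flip `|f⟩ ↦ |m + f⟩` by a mask `m`, and the four masks
connect every basis state to `0000` or `1000` in at most two steps: a common fixed vector is
determined by its two amplitudes there. Both `|φ_0000⟩` and `|φ_1110⟩` are fixed, and they
already realise every pair of such amplitudes. -/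

theorem mulVec_eq_self_of_sum_mulVec_eq_card {𝕜 ι m : Type*} [RCLike 𝕜] [Fintype ι]
    [Fintype m] [DecidableEq m] {S : ι → Matrix m m 𝕜} (hS : ∀ i, (S i).IsHermitian)
    (hS2 : ∀ i, S i * S i = 1) {ψ : m → 𝕜}
    (hψ : (∑ i, S i) *ᵥ ψ = (Fintype.card ι : 𝕜) • ψ) (i : ι) : S i *ᵥ ψ = ψ := by
  have hsq : ∀ i, (1 - S i)ᴴ * (1 - S i) = (2 : 𝕜) • (1 - S i) := fun i => by
    rw [conjTranspose_sub, conjTranspose_one, (hS i).eq]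
    simp only [sub_mul, mul_sub, hS2, one_mul, mul_one, two_smul]
    abel
  have hnorm : ∀ i, star ((1 - S i) *ᵥ ψ) ⬝ᵥ ((1 - S i) *ᵥ ψ)
      = 2 * (star ψ ⬝ᵥ ((1 - S i) *ᵥ ψ)) := fun i => by
    rw [star_mulVec, ← dotProduct_mulVec, mulVec_mulVec, hsq, smul_mulVec, dotProduct_smul,
      smul_eq_mul]
  have hsum : ∑ i, (1 - S i) *ᵥ ψ = 0 := by
    simp only [sub_mulVec, one_mulVec, Finset.sum_sub_distrib, ← sum_mulVec, hψ,
      Finset.sum_const, Finset.card_univ, Nat.cast_smul_eq_nsmul, sub_self]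
  have hzero : ∑ i, star ((1 - S i) *ᵥ ψ) ⬝ᵥ ((1 - S i) *ᵥ ψ) = 0 := by
    simp only [hnorm, ← Finset.mul_sum, ← dotProduct_sum, hsum, dotProduct_zero, mul_zero]
  have hi := (Finset.sum_eq_zero_iff_of_nonneg (fun j _ => dotProduct_star_self_nonneg _)).1
    hzero i (Finset.mem_univ i)
  rw [dotProduct_star_self_eq_zero, sub_mulVec, one_mulVec, sub_eq_zero] at hi
  exact hi.symm

section TensorOp

variable {n : ℕ}

theorem tensorOp_mul (M N : Fin n → Matrix Bool Bool ℂ) :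
    tensorOp M * tensorOp N = tensorOp (M * N) := by
  ext f h
  simp only [tensorOp, mul_apply, of_apply, Pi.mul_apply, Fintype.prod_sum,
    Finset.prod_mul_distrib]

theorem tensorOp_one : tensorOp (1 : Fin n → Matrix Bool Bool ℂ) = 1 := by
  ext f g
  simp [tensorOp, one_apply, Finset.prod_boole, funext_iff]

theorem tensorOp_conjTranspose (M : Fin n → Matrix Bool Bool ℂ) :
    (tensorOp M)ᴴ = tensorOp fun i => (M i)ᴴ := by
  ext f g
  simp [tensorOp, conjTranspose_apply]

theorem isHermitian_tensorOp {M : Fin n → Matrix Bool Bool ℂ} (hM : ∀ i, (M i).IsHermitian) :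
    (tensorOp M).IsHermitian := by
  rw [IsHermitian, tensorOp_conjTranspose]
  exact congrArg tensorOp (funext hM)

theorem tensorOp_mul_self {M : Fin n → Matrix Bool Bool ℂ} (hM : ∀ i, M i * M i = 1) :
    tensorOp M * tensorOp M = 1 := by
  rw [tensorOp_mul, ← tensorOp_one]
  exact congrArg tensorOp (funext hM)

end TensorOp

namespace Matrix

def IsShiftBy {G R : Type*} [Add G] [Zero R] (m : G) (A : Matrix G G R) : Prop :=
  ∀ f g, g ≠ m + f → A f g = 0

namespace IsShiftBy

variable {G R : Type*} [Add G] {m : G} {A : Matrix G G R}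

theorem neg [NegZeroClass R] (hA : IsShiftBy m A) : IsShiftBy m (-A) :=
  fun f g h => by simp [hA f g h]

variable [Fintype G] [NonUnitalNonAssocSemiring R]

theorem mulVec_apply (hA : IsShiftBy m A) (ψ : G → R) (f : G) :
    (A *ᵥ ψ) f = A f (m + f) * ψ (m + f) :=
  Finset.sum_eq_single _ (fun g _ hg => by simp [hA f g hg]) (by simp)

theorem apply_eq_zero_of_mulVec_eq_self (hA : IsShiftBy m A) {ψ : G → R} (hψ : A *ᵥ ψ = ψ)
    {f : G} (hf : ψ (m + f) = 0) : ψ f = 0 := by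
  rw [← hψ, hA.mulVec_apply, hf, mul_zero]

end IsShiftBy

end Matrix

theorem isShiftBy_tensorOp {n : ℕ} {x : Fin n → Bool} {M : Fin n → Matrix Bool Bool ℂ}
    (hM : ∀ i, IsShiftBy (x i) (M i)) : IsShiftBy x (tensorOp M) := by
  intro f g hfg
  obtain ⟨i, hi⟩ : ∃ i, g i ≠ x i + f i := by
    by_contra! h
    exact hfg (funext h)
  exact Finset.prod_eq_zero (Finset.mem_univ i) (hM i _ _ hi)

theorem isHermitian_pX : pX.IsHermitian := by
  ext b c; cases b <;> cases c <;> simp [pX]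

theorem isHermitian_pY : pY.IsHermitian := by
  ext b c; cases b <;> cases c <;> simp [pY]

theorem isHermitian_pZ : pZ.IsHermitian := by
  ext b c; cases b <;> cases c <;> simp [pZ]

theorem pX_mul_self : pX * pX = 1 := by
  ext b c; cases b <;> cases c <;> simp [pX, mul_apply]

theorem pY_mul_self : pY * pY = 1 := by
  ext b c; cases b <;> cases c <;> simp [pY, mul_apply]

theorem pZ_mul_self : pZ * pZ = 1 := by
  ext b c; cases b <;> cases c <;> simp [pZ, mul_apply]

theorem isShiftBy_pX : IsShiftBy true pX := by
  intro b c h; cases b <;> cases c <;> simp_all [pX]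

theorem isShiftBy_pY : IsShiftBy true pY := by
  intro b c h; cases b <;> cases c <;> simp_all [pY]

theorem isShiftBy_pZ : IsShiftBy false pZ := by
  intro b c h; cases b <;> cases c <;> simp_all [pZ]

theorem isShiftBy_one : IsShiftBy false (1 : Matrix Bool Bool ℂ) := by
  intro b c h; cases b <;> cases c <;> simp_all [one_apply]

noncomputable def bellTerm : Fin 4 → Matrix (Fin 4 → Bool) (Fin 4 → Bool) ℂ :=
  ![tensorOp ![pX, 1, pX, pZ], tensorOp ![pX, 1, pY, pY], tensorOp ![pZ, pY, pY, pZ],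
    -tensorOp ![pZ, pY, pX, pY]]

def bellMask : Fin 4 → Fin 4 → Bool :=
  ![![true, false, true, false], ![true, false, true, true], ![false, true, true, false],
    ![false, true, true, true]]

theorem bellB1_eq_sum : bellB1 = ∑ k, bellTerm k := by
  simp [bellB1, bellTerm, Fin.sum_univ_four, sub_eq_add_neg]

theorem isHermitian_bellTerm (k : Fin 4) : (bellTerm k).IsHermitian := by
  fin_cases k <;> simp only [bellTerm, Fin.zero_eta, Fin.mk_one, Fin.reduceFinMk, cons_val] <;>
    try apply IsHermitian.neg
  all_goals exact isHermitian_tensorOp (by simp [Fin.forall_fin_succ, isHermitian_pX,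
    isHermitian_pY, isHermitian_pZ])

theorem bellTerm_mul_self (k : Fin 4) : bellTerm k * bellTerm k = 1 := by
  fin_cases k <;> simp only [bellTerm, Fin.zero_eta, Fin.mk_one, Fin.reduceFinMk, cons_val,
    neg_mul_neg] <;>
  exact tensorOp_mul_self (by simp [Fin.forall_fin_succ, pX_mul_self, pY_mul_self, pZ_mul_self])

theorem isShiftBy_bellTerm (k : Fin 4) : IsShiftBy (bellMask k) (bellTerm k) := by
  fin_cases k <;>
    simp only [bellTerm, bellMask, Fin.zero_eta, Fin.mk_one, Fin.reduceFinMk, cons_val] <;>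
    try apply IsShiftBy.neg
  all_goals exact isShiftBy_tensorOp (by simp [Fin.forall_fin_succ, isShiftBy_pX,
    isShiftBy_pY, isShiftBy_pZ, isShiftBy_one])

theorem mem_eigenspace_bellB1_iff {ψ : (Fin 4 → Bool) → ℂ} :
    ψ ∈ Module.End.eigenspace (mulVecLin bellB1) 4 ↔ ∀ k, bellTerm k *ᵥ ψ = ψ := by
  rw [Module.End.mem_eigenspace_iff, mulVecLin_apply, bellB1_eq_sum]
  refine ⟨fun h => mulVec_eq_self_of_sum_mulVec_eq_card isHermitian_bellTerm
    bellTerm_mul_self (by simpa using h), fun h => ?_⟩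
  ext f
  simp [sum_mulVec, h]

theorem forall_fin_four_bool {P : (Fin 4 → Bool) → Prop} :
    (∀ f, P f) ↔ ∀ a b c d, P ![a, b, c, d] := by
  refine ⟨fun h _ _ _ _ => h _, fun h f => ?_⟩
  convert h (f 0) (f 1) (f 2) (f 3)
  ext i; fin_cases i <;> rfl

theorem bellTerm_mulVec_cluster4 (k : Fin 4) : bellTerm k *ᵥ cluster4 = cluster4 := by
  funext f
  rw [(isShiftBy_bellTerm k).mulVec_apply]
  revert f
  simp only [forall_fin_four_bool, Bool.forall_bool]
  fin_cases k <;>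
    simp only [bellTerm, bellMask, Fin.zero_eta, Fin.mk_one, Fin.reduceFinMk, cons_val,
      tensorOp, of_apply, Matrix.neg_apply, Fin.prod_univ_four, cons_add_cons, empty_add_empty,
      Bool.add_eq_xor, cluster4, one_apply] <;>
    norm_num [pX, pY, pZ]

theorem cluster4_1110_apply (f : Fin 4 → Bool) : cluster4_1110 f =
    (if f 0 then -1 else 1) * (if f 1 then -1 else 1) * (if f 2 then -1 else 1) * cluster4 f := by
  have hZ : IsShiftBy 0 (tensorOp ![pZ, pZ, pZ, 1]) :=
    isShiftBy_tensorOp fun i => by fin_cases i <;> first | exact isShiftBy_pZ | exact isShiftBy_one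
  rw [cluster4_1110, hZ.mulVec_apply, zero_add]
  simp only [tensorOp, of_apply, Fin.prod_univ_four, cons_val, one_apply, pZ]
  simp

theorem bellTerm_mulVec_cluster4_1110 (k : Fin 4) :
    bellTerm k *ᵥ cluster4_1110 = cluster4_1110 := by
  funext f
  rw [(isShiftBy_bellTerm k).mulVec_apply]
  revert f
  simp only [cluster4_1110_apply, forall_fin_four_bool, Bool.forall_bool]
  fin_cases k <;>
    simp only [bellTerm, bellMask, Fin.zero_eta, Fin.mk_one, Fin.reduceFinMk, cons_val,
      tensorOp, of_apply, Matrix.neg_apply, Fin.prod_univ_four, cons_add_cons, empty_add_empty,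
      Bool.add_eq_xor, cluster4, one_apply] <;>
    norm_num [pX, pY, pZ]

theorem bellMask_reach (f : Fin 4 → Bool) :
    let R : Finset (Fin 4 → Bool) := {0, ![true, false, false, false]}
    f ∈ R ∨ (∃ k, bellMask k + f ∈ R) ∨ ∃ k l, bellMask l + (bellMask k + f) ∈ R := by
  revert f
  decide

theorem eq_zero_of_forall_bellTerm_mulVec_eq_self {ψ : (Fin 4 → Bool) → ℂ}
    (hψ : ∀ k, bellTerm k *ᵥ ψ = ψ) (h0 : ψ 0 = 0) (h1 : ψ ![true, false, false, false] = 0) :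
    ψ = 0 := by
  have step : ∀ k f, ψ (bellMask k + f) = 0 → ψ f = 0 := fun k _ =>
    (isShiftBy_bellTerm k).apply_eq_zero_of_mulVec_eq_self (hψ k)
  have base : ∀ g ∈ ({0, ![true, false, false, false]} : Finset (Fin 4 → Bool)), ψ g = 0 := by
    simp [h0, h1]
  funext f
  rcases bellMask_reach f with h | ⟨k, h⟩ | ⟨k, l, h⟩
  · exact base f h
  · exact step k f (base _ h)
  · exact step k f (step l _ (base _ h))

theorem cluster4_apply_0000 : cluster4 0 = 1 / 4 := by
  simp [cluster4]

theorem cluster4_apply_1000 : cluster4 ![true, false, false, false] = 1 / 4 := by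
  simp [cluster4]

theorem cluster4_1110_apply_0000 : cluster4_1110 0 = 1 / 4 := by
  simp [cluster4_1110_apply, cluster4_apply_0000]

theorem cluster4_1110_apply_1000 : cluster4_1110 ![true, false, false, false] = -1 / 4 := by
  simp [cluster4_1110_apply, cluster4_apply_1000]
  norm_num

theorem mem_span_of_forall_bellTerm_mulVec_eq_self {ψ : (Fin 4 → Bool) → ℂ}
    (hψ : ∀ k, bellTerm k *ᵥ ψ = ψ) :
    ψ ∈ Submodule.span ℂ ({cluster4, cluster4_1110} : Set ((Fin 4 → Bool) → ℂ)) := by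
  set e : Fin 4 → Bool := ![true, false, false, false]
  set a := 2 * (ψ 0 + ψ e)
  set b := 2 * (ψ 0 - ψ e)
  have hχ : ψ - (a • cluster4 + b • cluster4_1110) = 0 := by
    apply eq_zero_of_forall_bellTerm_mulVec_eq_self
    · intro k
      simp only [mulVec_sub, mulVec_add, mulVec_smul, hψ, bellTerm_mulVec_cluster4,
        bellTerm_mulVec_cluster4_1110]
    · simp only [Pi.sub_apply, Pi.add_apply, Pi.smul_apply, smul_eq_mul, cluster4_apply_0000,
        cluster4_1110_apply_0000, a, b]
      ring
    · simp only [Pi.sub_apply, Pi.add_apply, Pi.smul_apply, smul_eq_mul, cluster4_apply_1000,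
        cluster4_1110_apply_1000, a, b]
      ring
  exact Submodule.mem_span_pair.2 ⟨a, b, (sub_eq_zero.1 hχ).symm⟩

theorem linearIndependent_cluster4_cluster4_1110 :
    LinearIndependent ℂ ![cluster4, cluster4_1110] := by
  refine LinearIndependent.pair_iff.2 fun s t hst => ?_
  have h0 := congrFun hst 0
  have h1 := congrFun hst ![true, false, false, false]
  simp only [Pi.add_apply, Pi.smul_apply, smul_eq_mul, Pi.zero_apply, cluster4_apply_0000,
    cluster4_1110_apply_0000, cluster4_apply_1000, cluster4_1110_apply_1000] at h0 h1
  constructor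
  · linear_combination 2 * h0 + 2 * h1
  · linear_combination 2 * h0 - 2 * h1

/-- The eigenspace of `B₁^φ` for its algebraically maximal eigenvalue `4`
is exactly the two-dimensional span of `|φ_0000⟩` and `|φ_1110⟩`; in particular every
superposition `α|φ_0000⟩ + β|φ_1110⟩` attains `⟨B₁^φ⟩ = 4`. -/
theorem stmt6 :
    Module.End.eigenspace (Matrix.mulVecLin bellB1) (4 : ℂ)
      = Submodule.span ℂ ({cluster4, cluster4_1110} : Set ((Fin 4 → Bool) → ℂ)) ∧
    Module.finrank ℂ
      ↥(Submodule.span ℂ ({cluster4, cluster4_1110} : Set ((Fin 4 → Bool) → ℂ))) = 2 := by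
  refine ⟨le_antisymm (fun ψ hψ => ?_) ?_, ?_⟩
  · exact mem_span_of_forall_bellTerm_mulVec_eq_self (mem_eigenspace_bellB1_iff.1 hψ)
  · rw [Submodule.span_le, Set.insert_subset_iff, Set.singleton_subset_iff]
    exact ⟨mem_eigenspace_bellB1_iff.2 bellTerm_mulVec_cluster4,
      mem_eigenspace_bellB1_iff.2 bellTerm_mulVec_cluster4_1110⟩
  · rw [← range_cons_cons_empty, finrank_span_eq_card linearIndependent_cluster4_cluster4_1110]
    simp
end

section
/- Let g₁ = Z₁Z₂, g₂ = Z₂Z₃, g₃ = Z₄Z₅, g₄ = Z₅Z₆, g₅ = Z₇Z₈, g₆ = Z₈Z₉, g₇ = X₁X₂X₃X₄X₅X₆, g₈ = X₄X₅X₆X₇X₈X₉ be the Shor code stabilizers on ℂ^512, and define the operator products h₁ = g₃g₈g₁g₄, h₂ = g₃g₈g₅g₇, h₃ = g₃g₈g₂, h₄ = g₃g₈g₇, h₅ = g₈g₄g₅, h₆ = g₈, h₇ = g₁g₂. Then: (i) every ψ in the Shor code space {ψ ∈ ℂ^512 : g_iψ = ψ for i = 1,…,8} satisfies h_jψ = ψ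 for all j = 1,…,7, so B_Shor ψ = 7ψ where B_Shor = Σ_{j=1}^7 h_j (the algebraic maximum); (ii) the common +1-eigenspace {ψ ∈ ℂ^512 : h_jψ = ψ for all j = 1,…,7} (the Bell-degenerate subspace of B_Shor) has dimension exactly 8. -/
set_option maxRecDepth 400000

open Matrix

/-- The eight Shor-code stabilizer generators
`g₁ = Z₁Z₂`, `g₂ = Z₂Z₃`, `g₃ = Z₄Z₅`, `g₄ = Z₅Z₆`, `g₅ = Z₇Z₈`, `g₆ = Z₈Z₉`,
`g₇ = X₁X₂X₃X₄X₅X₆`, `g₈ = X₄X₅X₆X₇X₈X₉` on `ℂ^512`. -/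
noncomputable def shorG : Fin 8 → Matrix (Fin 9 → Bool) (Fin 9 → Bool) ℂ :=
  ![tensorOp ![pZ, pZ, 1, 1, 1, 1, 1, 1, 1],
    tensorOp ![1, pZ, pZ, 1, 1, 1, 1, 1, 1],
    tensorOp ![1, 1, 1, pZ, pZ, 1, 1, 1, 1],
    tensorOp ![1, 1, 1, 1, pZ, pZ, 1, 1, 1],
    tensorOp ![1, 1, 1, 1, 1, 1, pZ, pZ, 1],
    tensorOp ![1, 1, 1, 1, 1, 1, 1, pZ, pZ],
    tensorOp ![pX, pX, pX, pX, pX, pX, 1, 1, 1],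
    tensorOp ![1, 1, 1, pX, pX, pX, pX, pX, pX]]

/-- The operator products `h₁ = g₃g₈g₁g₄`, `h₂ = g₃g₈g₅g₇`, `h₃ = g₃g₈g₂`, `h₄ = g₃g₈g₇`,
`h₅ = g₈g₄g₅`, `h₆ = g₈`, `h₇ = g₁g₂`. -/
noncomputable def shorH : Fin 7 → Matrix (Fin 9 → Bool) (Fin 9 → Bool) ℂ :=
  ![shorG 2 * shorG 7 * shorG 0 * shorG 3,
    shorG 2 * shorG 7 * shorG 4 * shorG 6,
    shorG 2 * shorG 7 * shorG 1,
    shorG 2 * shorG 7 * shorG 6,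
    shorG 7 * shorG 3 * shorG 4,
    shorG 7,
    shorG 0 * shorG 1]

/-- The Bell operator `B_Shor = Σ_{j=1}^7 h_j`. -/
noncomputable def bellShor : Matrix (Fin 9 → Bool) (Fin 9 → Bool) ℂ :=
  ∑ j : Fin 7, shorH j

namespace Stmt14Aux

/-! ### auxiliary vector-notation evaluation lemmas -/

variable {α : Type*}

lemma cons_val_five (x : α) {m : ℕ} (u : Fin m.succ.succ.succ.succ.succ → α) :
    vecCons x u 5 = vecHead (vecTail (vecTail (vecTail (vecTail u)))) := rfl
lemma cons_val_six (x : α) {m : ℕ} (u : Fin m.succ.succ.succ.succ.succ.succ → α) :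
    vecCons x u 6 = vecHead (vecTail (vecTail (vecTail (vecTail (vecTail u))))) := rfl
lemma cons_val_seven (x : α) {m : ℕ} (u : Fin m.succ.succ.succ.succ.succ.succ.succ → α) :
    vecCons x u 7 =
      vecHead (vecTail (vecTail (vecTail (vecTail (vecTail (vecTail u)))))) := rfl
lemma cons_val_eight (x : α) {m : ℕ} (u : Fin m.succ.succ.succ.succ.succ.succ.succ.succ → α) :
    vecCons x u 8 =
      vecHead (vecTail (vecTail (vecTail (vecTail (vecTail (vecTail (vecTail u))))))) := rfl

lemma prod_univ_nine (f : Fin 9 → ℂ) :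
    ∏ i, f i = f 0 * f 1 * f 2 * f 3 * f 4 * f 5 * f 6 * f 7 * f 8 := by
  rw [Fin.prod_univ_succ, Fin.prod_univ_eight]
  exact (by ring :
    f 0 * (f 1 * f 2 * f 3 * f 4 * f 5 * f 6 * f 7 * f 8) =
      f 0 * f 1 * f 2 * f 3 * f 4 * f 5 * f 6 * f 7 * f 8)

/-! ### signed bit-flip operators -/

noncomputable def s (b : Bool) : ℂ := if b then -1 else 1
@[simp] lemma s_false : s false = 1 := rfl
@[simp] lemma s_true : s true = -1 := rfl
lemma s_mul (a b : Bool) : s a * s b = s (xor a b) := by cases a <;> cases b <;> simp [s]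
lemma s_not (a : Bool) : s (!a) = -(s a) := by cases a <;> simp [s]

def xorf (m f : Fin 9 → Bool) : Fin 9 → Bool := fun i => xor (f i) (m i)

noncomputable def sp (e : (Fin 9 → Bool) → Bool) (m : Fin 9 → Bool) :
    Matrix (Fin 9 → Bool) (Fin 9 → Bool) ℂ :=
  Matrix.of fun f g => s (e f) * (if g = xorf m f then 1 else 0)

lemma sp_ext {e e' : (Fin 9 → Bool) → Bool} {m m' : Fin 9 → Bool}
    (h1 : ∀ f, e f = e' f) (h2 : ∀ i, m i = m' i) : sp e m = sp e' m' := by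
  have he : e = e' := funext h1
  have hm : m = m' := funext h2
  rw [he, hm]

lemma xorf_xorf (m1 m2 f : Fin 9 → Bool) :
    xorf m2 (xorf m1 f) = xorf (fun i => xor (m1 i) (m2 i)) f := by
  funext i; simp [xorf, Bool.xor_assoc]

lemma sp_mul (e1 e2 : (Fin 9 → Bool) → Bool) (m1 m2 : Fin 9 → Bool) :
    sp e1 m1 * sp e2 m2 =
      sp (fun f => xor (e1 f) (e2 (xorf m1 f))) (fun i => xor (m1 i) (m2 i)) := by
  ext f g
  simp only [sp, Matrix.mul_apply, Matrix.of_apply]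
  rw [Finset.sum_eq_single (xorf m1 f)]
  · rw [if_pos rfl, ← xorf_xorf m1 m2 f, ← s_mul]
    ring
  · intro b _ hb
    rw [if_neg hb]
    ring
  · intro h; exact absurd (Finset.mem_univ _) h

lemma sp_mulVec (e : (Fin 9 → Bool) → Bool) (m : Fin 9 → Bool) (ψ : (Fin 9 → Bool) → ℂ) :
    (sp e m).mulVec ψ = fun f => s (e f) * ψ (xorf m f) := by
  funext f
  simp only [Matrix.mulVec, dotProduct, sp, Matrix.of_apply]
  rw [Finset.sum_eq_single (xorf m f)]
  · rw [if_pos rfl]; ring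
  · intro b _ hb; rw [if_neg hb]; ring
  · intro h; exact absurd (Finset.mem_univ _) h

lemma tensorOp_sp (ev : Fin 9 → Bool → Bool) (m : Fin 9 → Bool)
    (M : Fin 9 → Matrix Bool Bool ℂ)
    (h : ∀ i b c, M i b c = s (ev i b) * (if c = xor b (m i) then 1 else 0))
    (e : (Fin 9 → Bool) → Bool)
    (he : ∀ f, (∏ i, s (ev i (f i))) = s (e f)) :
    tensorOp M = sp e m := by
  ext f g
  simp only [tensorOp, sp, Matrix.of_apply]
  calc ∏ i, M i (f i) (g i)
      = ∏ i, (s (ev i (f i)) * (if g i = xor (f i) (m i) then 1 else 0)) :=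
        Finset.prod_congr rfl fun i _ => h i _ _
    _ = (∏ i, s (ev i (f i))) * ∏ i, (if g i = xor (f i) (m i) then (1:ℂ) else 0) :=
        Finset.prod_mul_distrib
    _ = s (e f) * (if g = xorf m f then 1 else 0) := by
        rw [he, Finset.prod_boole]
        congr 1
        simp [funext_iff, xorf]

/-! ### masks and single-bit sign functions -/

def m0 : Fin 9 → Bool := fun _ => false
def mA : Fin 9 → Bool := ![false, false, false, true, true, true, true, true, true]
def m7 : Fin 9 → Bool := ![true, true, true, true, true, true, false, false, false]
def mB : Fin 9 → Bool := ![true, true, true, false, false, false, true, true, true]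

def idb : Bool → Bool := fun b => b
def cb : Bool → Bool := fun _ => false

/-! ### the generators as signed bit-flip operators -/

lemma hG0 : shorG 0 = sp (fun f => xor (f 0) (f 1)) m0 := by
  have hs : shorG 0 = tensorOp ![pZ, pZ, 1, 1, 1, 1, 1, 1, 1] := rfl
  rw [hs]
  refine tensorOp_sp ![idb, idb, cb, cb, cb, cb, cb, cb, cb] m0 _ ?_ _ ?_
  · intro i
    fin_cases i <;> intro b c <;> cases b <;> cases c <;>
      simp [pZ, pX, Matrix.one_apply, idb, cb, m0, s, Matrix.vecHead, Matrix.vecTail, Function.comp, cons_val_five, cons_val_six,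
        cons_val_seven, cons_val_eight]
  · intro f
    rw [prod_univ_nine]
    simp [idb, cb, Matrix.vecHead, Matrix.vecTail, Function.comp, cons_val_five, cons_val_six, cons_val_seven, cons_val_eight, s_mul]

lemma hG1 : shorG 1 = sp (fun f => xor (f 1) (f 2)) m0 := by
  have hs : shorG 1 = tensorOp ![1, pZ, pZ, 1, 1, 1, 1, 1, 1] := rfl
  rw [hs]
  refine tensorOp_sp ![cb, idb, idb, cb, cb, cb, cb, cb, cb] m0 _ ?_ _ ?_
  · intro i
    fin_cases i <;> intro b c <;> cases b <;> cases c <;>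
      simp [pZ, pX, Matrix.one_apply, idb, cb, m0, s, Matrix.vecHead, Matrix.vecTail, Function.comp, cons_val_five, cons_val_six,
        cons_val_seven, cons_val_eight]
  · intro f
    rw [prod_univ_nine]
    simp [idb, cb, Matrix.vecHead, Matrix.vecTail, Function.comp, cons_val_five, cons_val_six, cons_val_seven, cons_val_eight, s_mul]

lemma hG2 : shorG 2 = sp (fun f => xor (f 3) (f 4)) m0 := by
  have hs : shorG 2 = tensorOp ![1, 1, 1, pZ, pZ, 1, 1, 1, 1] := rfl
  rw [hs]
  refine tensorOp_sp ![cb, cb, cb, idb, idb, cb, cb, cb, cb] m0 _ ?_ _ ?_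
  · intro i
    fin_cases i <;> intro b c <;> cases b <;> cases c <;>
      simp [pZ, pX, Matrix.one_apply, idb, cb, m0, s, Matrix.vecHead, Matrix.vecTail, Function.comp, cons_val_five, cons_val_six,
        cons_val_seven, cons_val_eight]
  · intro f
    rw [prod_univ_nine]
    simp [idb, cb, Matrix.vecHead, Matrix.vecTail, Function.comp, cons_val_five, cons_val_six, cons_val_seven, cons_val_eight, s_mul]

lemma hG3 : shorG 3 = sp (fun f => xor (f 4) (f 5)) m0 := by
  have hs : shorG 3 = tensorOp ![1, 1, 1, 1, pZ, pZ, 1, 1, 1] := rfl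
  rw [hs]
  refine tensorOp_sp ![cb, cb, cb, cb, idb, idb, cb, cb, cb] m0 _ ?_ _ ?_
  · intro i
    fin_cases i <;> intro b c <;> cases b <;> cases c <;>
      simp [pZ, pX, Matrix.one_apply, idb, cb, m0, s, Matrix.vecHead, Matrix.vecTail, Function.comp, cons_val_five, cons_val_six,
        cons_val_seven, cons_val_eight]
  · intro f
    rw [prod_univ_nine]
    simp [idb, cb, Matrix.vecHead, Matrix.vecTail, Function.comp, cons_val_five, cons_val_six, cons_val_seven, cons_val_eight, s_mul]

lemma hG4 : shorG 4 = sp (fun f => xor (f 6) (f 7)) m0 := by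
  have hs : shorG 4 = tensorOp ![1, 1, 1, 1, 1, 1, pZ, pZ, 1] := rfl
  rw [hs]
  refine tensorOp_sp ![cb, cb, cb, cb, cb, cb, idb, idb, cb] m0 _ ?_ _ ?_
  · intro i
    fin_cases i <;> intro b c <;> cases b <;> cases c <;>
      simp [pZ, pX, Matrix.one_apply, idb, cb, m0, s, Matrix.vecHead, Matrix.vecTail, Function.comp, cons_val_five, cons_val_six,
        cons_val_seven, cons_val_eight]
  · intro f
    rw [prod_univ_nine]
    simp [idb, cb, Matrix.vecHead, Matrix.vecTail, Function.comp, cons_val_five, cons_val_six, cons_val_seven, cons_val_eight, s_mul]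

lemma hG5 : shorG 5 = sp (fun f => xor (f 7) (f 8)) m0 := by
  have hs : shorG 5 = tensorOp ![1, 1, 1, 1, 1, 1, 1, pZ, pZ] := rfl
  rw [hs]
  refine tensorOp_sp ![cb, cb, cb, cb, cb, cb, cb, idb, idb] m0 _ ?_ _ ?_
  · intro i
    fin_cases i <;> intro b c <;> cases b <;> cases c <;>
      simp [pZ, pX, Matrix.one_apply, idb, cb, m0, s, Matrix.vecHead, Matrix.vecTail, Function.comp, cons_val_five, cons_val_six,
        cons_val_seven, cons_val_eight]
  · intro f
    rw [prod_univ_nine]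
    simp [idb, cb, Matrix.vecHead, Matrix.vecTail, Function.comp, cons_val_five, cons_val_six, cons_val_seven, cons_val_eight, s_mul]

lemma hG6 : shorG 6 = sp (fun _ => false) m7 := by
  have hs : shorG 6 = tensorOp ![pX, pX, pX, pX, pX, pX, 1, 1, 1] := rfl
  rw [hs]
  refine tensorOp_sp ![cb, cb, cb, cb, cb, cb, cb, cb, cb] m7 _ ?_ _ ?_
  · intro i
    fin_cases i <;> intro b c <;> cases b <;> cases c <;>
      simp [pZ, pX, Matrix.one_apply, idb, cb, m7, s, Matrix.vecHead, Matrix.vecTail, Function.comp, cons_val_five, cons_val_six,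
        cons_val_seven, cons_val_eight]
  · intro f
    rw [prod_univ_nine]
    simp [cb, Matrix.vecHead, Matrix.vecTail, Function.comp, cons_val_five, cons_val_six, cons_val_seven, cons_val_eight]

lemma hG7 : shorG 7 = sp (fun _ => false) mA := by
  have hs : shorG 7 = tensorOp ![1, 1, 1, pX, pX, pX, pX, pX, pX] := rfl
  rw [hs]
  refine tensorOp_sp ![cb, cb, cb, cb, cb, cb, cb, cb, cb] mA _ ?_ _ ?_
  · intro i
    fin_cases i <;> intro b c <;> cases b <;> cases c <;>
      simp [pZ, pX, Matrix.one_apply, idb, cb, mA, s, Matrix.vecHead, Matrix.vecTail, Function.comp, cons_val_five, cons_val_six,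
        cons_val_seven, cons_val_eight]
  · intro f
    rw [prod_univ_nine]
    simp [cb, Matrix.vecHead, Matrix.vecTail, Function.comp, cons_val_five, cons_val_six, cons_val_seven, cons_val_eight]

/-! ### the products `h_j` as signed bit-flip operators -/

def e1 (f : Fin 9 → Bool) : Bool := xor (f 0) (xor (f 1) (xor (f 3) (f 5)))
def e2 (f : Fin 9 → Bool) : Bool := xor (f 3) (xor (f 4) (xor (f 6) (f 7)))
def e3 (f : Fin 9 → Bool) : Bool := xor (f 1) (xor (f 2) (xor (f 3) (f 4)))
def e4 (f : Fin 9 → Bool) : Bool := xor (f 3) (f 4)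
def e5 (f : Fin 9 → Bool) : Bool := xor (f 4) (xor (f 5) (xor (f 6) (f 7)))
def e7 (f : Fin 9 → Bool) : Bool := xor (f 0) (f 2)

lemma hH0 : shorH 0 = sp e1 mA := by
  have h : shorH 0 = shorG 2 * shorG 7 * shorG 0 * shorG 3 := rfl
  rw [h, hG2, hG7, hG0, hG3, sp_mul, sp_mul, sp_mul]
  exact sp_ext (by decide) (by decide)

lemma hH1 : shorH 1 = sp e2 mB := by
  have h : shorH 1 = shorG 2 * shorG 7 * shorG 4 * shorG 6 := rfl
  rw [h, hG2, hG7, hG4, hG6, sp_mul, sp_mul, sp_mul]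
  exact sp_ext (by decide) (by decide)

lemma hH2 : shorH 2 = sp e3 mA := by
  have h : shorH 2 = shorG 2 * shorG 7 * shorG 1 := rfl
  rw [h, hG2, hG7, hG1, sp_mul, sp_mul]
  exact sp_ext (by decide) (by decide)

lemma hH3 : shorH 3 = sp e4 mB := by
  have h : shorH 3 = shorG 2 * shorG 7 * shorG 6 := rfl
  rw [h, hG2, hG7, hG6, sp_mul, sp_mul]
  exact sp_ext (by decide) (by decide)

lemma hH4 : shorH 4 = sp e5 mA := by
  have h : shorH 4 = shorG 7 * shorG 3 * shorG 4 := rfl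
  rw [h, hG7, hG3, hG4, sp_mul, sp_mul]
  exact sp_ext (by decide) (by decide)

lemma hH5 : shorH 5 = sp (fun _ => false) mA := by
  have h : shorH 5 = shorG 7 := rfl
  rw [h, hG7]

lemma hH6 : shorH 6 = sp e7 m0 := by
  have h : shorH 6 = shorG 0 * shorG 1 := rfl
  rw [h, hG0, hG1, sp_mul]
  exact sp_ext (by decide) (by decide)

/-! ### support, invariants, sign, representatives -/

def suppb (f : Fin 9 → Bool) : Bool :=
  (f 2 == f 0) && (f 5 == f 4) && (f 7 == f 6) &&
    (xor (f 0) (xor (f 1) (xor (f 3) (f 4))) == false)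

def inv (f : Fin 9 → Bool) : Bool × Bool × Bool :=
  (xor (f 0) (f 1), xor (f 4) (xor (f 0) (f 6)), xor (f 8) (f 6))

def sgn (f : Fin 9 → Bool) : Bool := f 0 && xor (f 3) (f 4)

def rep' : Bool × Bool × Bool → Fin 9 → Bool := fun k =>
  ![false, k.1, false, xor k.1 k.2.1, k.2.1, k.2.1, false, false, k.2.2]

noncomputable def w (k : Bool × Bool × Bool) (f : Fin 9 → Bool) : ℂ :=
  if suppb f = true ∧ inv f = k then s (sgn f) else 0

lemma w_eig (e : (Fin 9 → Bool) → Bool) (m : Fin 9 → Bool) (k : Bool × Bool × Bool)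
    (h1 : ∀ f, suppb (xorf m f) = suppb f)
    (h2 : ∀ f, inv (xorf m f) = inv f)
    (h3 : ∀ f, suppb f = true → xor (e f) (xor (sgn (xorf m f)) (sgn f)) = false) :
    ∀ f, s (e f) * w k (xorf m f) = w k f := by
  intro f
  by_cases hc : suppb f = true ∧ inv f = k
  · have hc' : suppb (xorf m f) = true ∧ inv (xorf m f) = k := by rw [h1, h2]; exact hc
    rw [w, w, if_pos hc, if_pos hc', s_mul]
    congr 1
    exact (by decide : ∀ x y z : Bool, xor x (xor y z) = false → xor x y = z) _ _ _
      (h3 f hc.1)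
  · have hc' : ¬(suppb (xorf m f) = true ∧ inv (xorf m f) = k) := by rw [h1, h2]; exact hc
    rw [w, w, if_neg hc, if_neg hc', mul_zero]

end Stmt14Aux

namespace Stmt14Aux

/-! ### decidable combinatorial facts -/

lemma xorf_m0 : ∀ f, xorf m0 f = f := by decide
lemma suppA : ∀ f, suppb (xorf mA f) = suppb f := by decide
lemma suppB : ∀ f, suppb (xorf mB f) = suppb f := by decide
lemma supp0 : ∀ f, suppb (xorf m0 f) = suppb f := by decide
lemma invA : ∀ f, inv (xorf mA f) = inv f := by decide
lemma invB : ∀ f, inv (xorf mB f) = inv f := by decide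
lemma inv0 : ∀ f, inv (xorf m0 f) = inv f := by decide
lemma sgn1 : ∀ f, suppb f = true → xor (e1 f) (xor (sgn (xorf mA f)) (sgn f)) = false := by
  decide
lemma sgn2 : ∀ f, suppb f = true → xor (e2 f) (xor (sgn (xorf mB f)) (sgn f)) = false := by
  decide
lemma sgn3 : ∀ f, suppb f = true → xor (e3 f) (xor (sgn (xorf mA f)) (sgn f)) = false := by
  decide
lemma sgn4 : ∀ f, suppb f = true → xor (e4 f) (xor (sgn (xorf mB f)) (sgn f)) = false := by
  decide
lemma sgn5 : ∀ f, suppb f = true → xor (e5 f) (xor (sgn (xorf mA f)) (sgn f)) = false := by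
  decide
lemma sgn6 : ∀ f, suppb f = true → xor false (xor (sgn (xorf mA f)) (sgn f)) = false := by
  decide
lemma sgn7 : ∀ f, suppb f = true → xor (e7 f) (xor (sgn (xorf m0 f)) (sgn f)) = false := by
  decide

lemma suppb_rep : ∀ k, suppb (rep' k) = true := by decide
lemma inv_rep : ∀ k, inv (rep' k) = k := by decide
lemma sgn_rep : ∀ k, sgn (rep' k) = false := by decide
lemma rep_of : ∀ f, suppb f = true → f 0 = false → f 6 = false → f = rep' (inv f) := by decide

lemma L1 : ∀ f, xor (f 6) (f 7) = true → e2 f = !(e4 f) := by decide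
lemma L2 : ∀ f, xor (f 6) (f 7) = false → xor (f 4) (f 5) = true → e5 f = true := by decide
lemma L3 : ∀ f, xor (f 4) (f 5) = false →
    xor (f 0) (xor (f 1) (xor (f 3) (f 4))) = true → e1 f = true := by decide
lemma suppb_of : ∀ f, xor (f 0) (f 2) = false → xor (f 6) (f 7) = false →
    xor (f 4) (f 5) = false → xor (f 0) (xor (f 1) (xor (f 3) (f 4))) = false →
    suppb f = true := by decide
lemma xA0 : ∀ f, (xorf mA f) 0 = f 0 := by decide
lemma xA6 : ∀ f, (xorf mA f) 6 = !(f 6) := by decide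
lemma xB0 : ∀ f, (xorf mB f) 0 = !(f 0) := by decide
lemma xB6 : ∀ f, (xorf mB f) 6 = !(f 6) := by decide

/-! ### the key injectivity lemma -/

lemma neg_cancel (a : ℂ) (h : -a = a) : a = 0 := by
  have h2 : a + a = 0 := by
    calc a + a = -a + a := by rw [h]
      _ = 0 := neg_add_cancel a
  exact add_self_eq_zero.mp h2

lemma bool_false {b : Bool} (h : ¬ b = true) : b = false := by cases b <;> simp_all

lemma key (ψ : (Fin 9 → Bool) → ℂ)
    (H1 : ∀ f, s (e1 f) * ψ (xorf mA f) = ψ f)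
    (H2 : ∀ f, s (e2 f) * ψ (xorf mB f) = ψ f)
    (H4 : ∀ f, s (e4 f) * ψ (xorf mB f) = ψ f)
    (H5 : ∀ f, s (e5 f) * ψ (xorf mA f) = ψ f)
    (H6 : ∀ f, ψ (xorf mA f) = ψ f)
    (H7 : ∀ f, s (e7 f) * ψ f = ψ f)
    (hz : ∀ k, ψ (rep' k) = 0) : ψ = 0 := by
  funext f
  show ψ f = 0
  by_cases c02 : xor (f 0) (f 2) = true
  · have h := H7 f
    have he : e7 f = true := c02
    rw [he, s_true, neg_one_mul] at h
    exact neg_cancel _ h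
  have c02' : xor (f 0) (f 2) = false := bool_false c02
  by_cases c67 : xor (f 6) (f 7) = true
  · have h2 := H2 f
    rw [L1 f c67, s_not, neg_mul, H4 f] at h2
    exact neg_cancel _ h2
  have c67' : xor (f 6) (f 7) = false := bool_false c67
  by_cases c45 : xor (f 4) (f 5) = true
  · have h5 := H5 f
    rw [L2 f c67' c45, s_true, neg_one_mul, H6 f] at h5
    exact neg_cancel _ h5
  have c45' : xor (f 4) (f 5) = false := bool_false c45
  by_cases c13 : xor (f 0) (xor (f 1) (xor (f 3) (f 4))) = true
  · have h1 := H1 f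
    rw [L3 f c45' c13, s_true, neg_one_mul, H6 f] at h1
    exact neg_cancel _ h1
  have c13' : xor (f 0) (xor (f 1) (xor (f 3) (f 4))) = false := bool_false c13
  have hsupp : suppb f = true := suppb_of f c02' c67' c45' c13'
  by_cases h0 : f 0 = true
  · have h4 := H4 f
    have hsB : suppb (xorf mB f) = true := by rw [suppB]; exact hsupp
    have hB0 : (xorf mB f) 0 = false := by rw [xB0, h0]; rfl
    by_cases h6 : (xorf mB f) 6 = true
    · have h6' := H6 (xorf mB f)
      have hsA : suppb (xorf mA (xorf mB f)) = true := by rw [suppA]; exact hsB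
      have hA0 : (xorf mA (xorf mB f)) 0 = false := by rw [xA0]; exact hB0
      have hA6 : (xorf mA (xorf mB f)) 6 = false := by rw [xA6, h6]; rfl
      have hrep := rep_of _ hsA hA0 hA6
      have hg : ψ (xorf mB f) = 0 := by rw [← h6', hrep]; exact hz _
      rw [hg, mul_zero] at h4
      exact h4.symm
    · have hB6 : (xorf mB f) 6 = false := bool_false h6
      have hrep := rep_of _ hsB hB0 hB6
      have hg : ψ (xorf mB f) = 0 := by rw [hrep]; exact hz _
      rw [hg, mul_zero] at h4
      exact h4.symm
  · have h0' : f 0 = false := bool_false h0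
    by_cases h6 : f 6 = true
    · have h6' := H6 f
      have hsA : suppb (xorf mA f) = true := by rw [suppA]; exact hsupp
      have hA0 : (xorf mA f) 0 = false := by rw [xA0]; exact h0'
      have hA6 : (xorf mA f) 6 = false := by rw [xA6, h6]; rfl
      have hrep := rep_of _ hsA hA0 hA6
      rw [← h6', hrep]
      exact hz _
    · have h6'' : f 6 = false := bool_false h6
      have hrep := rep_of f hsupp h0' h6''
      rw [hrep]
      exact hz _

/-! ### the evaluation map -/

noncomputable def phi : ((Fin 9 → Bool) → ℂ) →ₗ[ℂ] ((Bool × Bool × Bool) → ℂ) where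
  toFun ψ := fun k => ψ (rep' k)
  map_add' := fun _ _ => rfl
  map_smul' := fun _ _ => rfl

lemma phi_w (k : Bool × Bool × Bool) : phi (w k) = Pi.single k 1 := by
  funext k'
  simp only [phi, LinearMap.coe_mk, AddHom.coe_mk]
  rw [w]
  simp only [suppb_rep, inv_rep, sgn_rep, s_false, true_and]
  rw [Pi.single_apply]

lemma mem_E (ψ : (Fin 9 → Bool) → ℂ) :
    (ψ ∈ ⨅ j : Fin 7, Module.End.eigenspace (Matrix.mulVecLin (shorH j)) 1) ↔
      ∀ j, (shorH j).mulVec ψ = ψ := by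
  simp [Submodule.mem_iInf, Module.End.mem_eigenspace_iff, Matrix.mulVecLin_apply]

end Stmt14Aux

open Stmt14Aux in
/-- (i) Every state in the Shor code space is a `+1`-eigenstate of all
the `h_j`, hence an eigenstate of `B_Shor` with the algebraically maximal eigenvalue `7`;
(ii) the common `+1`-eigenspace of the `h_j` (the Bell-degenerate subspace of `B_Shor`)
has dimension exactly `8`. -/
theorem stmt14 :
    (∀ ψ : (Fin 9 → Bool) → ℂ,
      (∀ i : Fin 8, Matrix.mulVec (shorG i) ψ = ψ) →
      (∀ j : Fin 7, Matrix.mulVec (shorH j) ψ = ψ) ∧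
        Matrix.mulVec bellShor ψ = (7 : ℂ) • ψ) ∧
    Module.finrank ℂ
      ↥(⨅ j : Fin 7, Module.End.eigenspace (Matrix.mulVecLin (shorH j)) 1) = 8 := by
  constructor
  · intro ψ h
    have hh : ∀ j : Fin 7, Matrix.mulVec (shorH j) ψ = ψ := by
      intro j
      fin_cases j
      · show ((shorG 2 * shorG 7 * shorG 0) * shorG 3).mulVec ψ = ψ
        rw [← Matrix.mulVec_mulVec, h 3, ← Matrix.mulVec_mulVec, h 0,
          ← Matrix.mulVec_mulVec, h 7, h 2]
      · show ((shorG 2 * shorG 7 * shorG 4) * shorG 6).mulVec ψ = ψ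
        rw [← Matrix.mulVec_mulVec, h 6, ← Matrix.mulVec_mulVec, h 4,
          ← Matrix.mulVec_mulVec, h 7, h 2]
      · show ((shorG 2 * shorG 7) * shorG 1).mulVec ψ = ψ
        rw [← Matrix.mulVec_mulVec, h 1, ← Matrix.mulVec_mulVec, h 7, h 2]
      · show ((shorG 2 * shorG 7) * shorG 6).mulVec ψ = ψ
        rw [← Matrix.mulVec_mulVec, h 6, ← Matrix.mulVec_mulVec, h 7, h 2]
      · show ((shorG 7 * shorG 3) * shorG 4).mulVec ψ = ψ
        rw [← Matrix.mulVec_mulVec, h 4, ← Matrix.mulVec_mulVec, h 3, h 7]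
      · exact h 7
      · show (shorG 0 * shorG 1).mulVec ψ = ψ
        rw [← Matrix.mulVec_mulVec, h 1, h 0]
    refine ⟨hh, ?_⟩
    have hsum : bellShor.mulVec ψ = ∑ j : Fin 7, (shorH j).mulVec ψ := by
      funext f
      simp only [bellShor, Matrix.mulVec, dotProduct, Matrix.sum_apply, Finset.sum_apply,
        Finset.sum_mul]
      exact Finset.sum_comm
    rw [hsum]
    calc ∑ j : Fin 7, (shorH j).mulVec ψ = ∑ _j : Fin 7, ψ :=
          Finset.sum_congr rfl fun j _ => hh j
      _ = (7 : ℂ) • ψ := by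
          rw [Finset.sum_const, Finset.card_univ, Fintype.card_fin,
            ← Nat.cast_smul_eq_nsmul ℂ]
          norm_num
  · set E := ⨅ j : Fin 7, Module.End.eigenspace (Matrix.mulVecLin (shorH j)) 1 with hE
    -- membership of the `w k`
    have hwE : ∀ k, w k ∈ E := by
      intro k
      rw [hE, mem_E]
      intro j
      fin_cases j
      · show shorH 0 *ᵥ w k = w k
        rw [show shorH 0 = sp e1 mA from hH0, sp_mulVec]
        funext f; exact w_eig e1 mA k suppA invA sgn1 f
      · show shorH 1 *ᵥ w k = w k
        rw [show shorH 1 = sp e2 mB from hH1, sp_mulVec]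
        funext f; exact w_eig e2 mB k suppB invB sgn2 f
      · show shorH 2 *ᵥ w k = w k
        rw [show shorH 2 = sp e3 mA from hH2, sp_mulVec]
        funext f; exact w_eig e3 mA k suppA invA sgn3 f
      · show shorH 3 *ᵥ w k = w k
        rw [show shorH 3 = sp e4 mB from hH3, sp_mulVec]
        funext f; exact w_eig e4 mB k suppB invB sgn4 f
      · show shorH 4 *ᵥ w k = w k
        rw [show shorH 4 = sp e5 mA from hH4, sp_mulVec]
        funext f; exact w_eig e5 mA k suppA invA sgn5 f
      · show shorH 5 *ᵥ w k = w k
        rw [show shorH 5 = sp (fun _ => false) mA from hH5, sp_mulVec]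
        funext f; exact w_eig (fun _ => false) mA k suppA invA sgn6 f
      · show shorH 6 *ᵥ w k = w k
        rw [show shorH 6 = sp e7 m0 from hH6, sp_mulVec]
        funext f; exact w_eig e7 m0 k supp0 inv0 sgn7 f
    -- linear independence of the `w k`
    have hli : LinearIndependent ℂ w := by
      apply LinearIndependent.of_comp phi
      have hcomp : (phi ∘ w) = fun k => Pi.single k (1 : ℂ) := funext phi_w
      rw [hcomp]
      have hbas : (fun k => Pi.single k (1 : ℂ)) = ⇑(Pi.basisFun ℂ (Bool × Bool × Bool)) := by
        funext k; rw [Pi.basisFun_apply]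
      rw [hbas]
      exact (Pi.basisFun ℂ (Bool × Bool × Bool)).linearIndependent
    have hspan : Submodule.span ℂ (Set.range w) ≤ E :=
      Submodule.span_le.mpr (by rintro x ⟨k, rfl⟩; exact hwE k)
    have hlow : 8 ≤ Module.finrank ℂ E := by
      have h8 : Module.finrank ℂ (Submodule.span ℂ (Set.range w)) = 8 := by
        rw [finrank_span_eq_card hli]
        rfl
      rw [← h8]
      exact Submodule.finrank_mono hspan
    -- upper bound via injectivity of evaluation
    have hinj : Function.Injective (phi ∘ₗ E.subtype) := by
      rw [← LinearMap.ker_eq_bot]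
      rw [Submodule.eq_bot_iff]
      rintro ⟨ψ, hψ⟩ hx
      have hz : ∀ k, ψ (rep' k) = 0 := fun k => congrFun (LinearMap.mem_ker.mp hx) k
      have hmem := (mem_E ψ).mp (hE ▸ hψ)
      have H1 := hmem 0; rw [hH0, sp_mulVec] at H1
      have H2 := hmem 1; rw [hH1, sp_mulVec] at H2
      have H4 := hmem 3; rw [hH3, sp_mulVec] at H4
      have H5 := hmem 4; rw [hH4, sp_mulVec] at H5
      have H6 := hmem 5; rw [hH5, sp_mulVec] at H6
      have H7 := hmem 6; rw [hH6, sp_mulVec] at H7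
      have hψ0 : ψ = 0 := by
        refine key ψ (fun f => congrFun H1 f) (fun f => congrFun H2 f)
          (fun f => congrFun H4 f) (fun f => congrFun H5 f) ?_ ?_ hz
        · intro f
          have := congrFun H6 f
          simpa using this
        · intro f
          have := congrFun H7 f
          rwa [xorf_m0] at this
      exact Subtype.ext hψ0
    have hup : Module.finrank ℂ E ≤ 8 := by
      have h := LinearMap.finrank_le_finrank_of_injective hinj
      rwa [show Module.finrank ℂ ((Bool × Bool × Bool) → ℂ) = 8 by
        rw [Module.finrank_pi]; rfl] at h
    exact le_antisymm hup hlow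
end

section
/- Let |φ_0000⟩ ∈ ℂ^16 be the 4-qubit linear cluster state, |φ_0101⟩ = Z₂Z₄|φ_0000⟩, |Φ⁺⟩ = (|00⟩ + |11⟩)/√2, and |±⟩ = (|0⟩ ± |1⟩)/√2. Then there exists a nonzero constant c ∈ ℂ, independent of α and β, such that for all α, β ∈ ℂ: (⟨Φ⁺|_{u,1} ⊗ ⟨00|_{2,3} ⊗ I_4)(|0⟩_u ⊗ (α|φ_0000⟩ + β|φ_0101⟩)_{1234}) = c(α|+⟩ + β|−⟩)_4. That is, teleporting the fiducial state |0⟩ over the channel α|φ_0000⟩ + β|φ_0101⟩, with Alice's Bell-basis outcome Φ⁺ on qubits (u,1) and Bob's computational-basis outcome |00⟩ on qubits (2,3), leaves Rex's qubit 4 in a state locally equivalent to the secret α|0⟩ + β|1⟩. -/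
open Matrix
open scoped ComplexConjugate

/-- `|φ_0101⟩ = Z₂Z₄|φ_0000⟩`. -/
noncomputable def cluster4_0101 : (Fin 4 → Bool) → ℂ :=
  Matrix.mulVec (tensorOp ![1, pZ, 1, pZ]) cluster4

/-- The Bell state `|Φ⁺⟩ = (|00⟩ + |11⟩)/√2`. -/
noncomputable def phiPlus : Bool → Bool → ℂ := fun u a =>
  if u = a then (((1 / Real.sqrt 2 : ℝ)) : ℂ) else 0

/-- The state `|+⟩ = (|0⟩ + |1⟩)/√2`. -/
noncomputable def ketPlus : Bool → ℂ := fun _ => (((1 / Real.sqrt 2 : ℝ)) : ℂ)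

/-- The state `|−⟩ = (|0⟩ − |1⟩)/√2`. -/
noncomputable def ketMinus : Bool → ℂ := fun b =>
  if b then -(((1 / Real.sqrt 2 : ℝ)) : ℂ) else (((1 / Real.sqrt 2 : ℝ)) : ℂ)


lemma cluster4_0101_eq (f : Fin 4 → Bool) :
    cluster4_0101 f = (if f 1 then -1 else 1) * (if f 3 then -1 else 1) * cluster4 f := by
  unfold cluster4_0101 Matrix.mulVec dotProduct tensorOp
  rw [Finset.sum_eq_single f]
  · simp only [Matrix.of_apply, Fin.prod_univ_four, Matrix.cons_val_zero,
      Matrix.cons_val_one, Matrix.head_cons, Matrix.one_apply_eq, pZ,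
      Matrix.cons_val', Matrix.cons_val_fin_one, Matrix.empty_val']
    simp only [Matrix.cons_val_two, Matrix.cons_val_three, Matrix.tail_cons, Matrix.head_cons]
    cases f 1 <;> cases f 3 <;> simp [Matrix.one_apply] <;> ring
  · intro g _ hg
    obtain ⟨i, hi⟩ : ∃ i, f i ≠ g i := by
      by_contra h; push_neg at h; exact hg (funext fun i => (h i).symm)
    have hz : (![1, pZ, 1, pZ] : Fin 4 → Matrix Bool Bool ℂ) i (f i) (g i) = 0 := by
      fin_cases i <;> simp_all [pZ, Matrix.one_apply]
    simp only [Matrix.of_apply]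
    rw [Finset.prod_eq_zero (Finset.mem_univ i) hz, zero_mul]
  · simp

/-- Teleporting the fiducial `|0⟩` over `α|φ_0000⟩ + β|φ_0101⟩`, with
Alice's Bell outcome `Φ⁺` on `(u,1)` and Bob's outcome `|00⟩` on `(2,3)`, leaves Rex's
qubit 4 in `c(α|+⟩ + β|−⟩)` for a fixed nonzero constant `c` independent of `α, β`. -/
theorem stmt16 :
    ∃ c : ℂ, c ≠ 0 ∧ ∀ α β : ℂ,
      (fun b : Bool => ∑ u : Bool, ∑ q1 : Bool, ∑ q2 : Bool, ∑ q3 : Bool,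
          conj (phiPlus u q1) * conj (if q2 = false ∧ q3 = false then (1 : ℂ) else 0)
            * ((if u then 0 else 1)
                * (α • cluster4 + β • cluster4_0101) ![q1, q2, q3, b]))
        = fun b : Bool => c * (α * ketPlus b + β * ketMinus b) := by
  refine ⟨1/4, by norm_num, fun α β => ?_⟩
  funext b
  simp only [Fintype.sum_bool, phiPlus, Pi.add_apply, Pi.smul_apply, smul_eq_mul,
    cluster4_0101_eq, cluster4, ketPlus, ketMinus, Matrix.cons_val_zero,
    Matrix.cons_val_one, Matrix.head_cons]
  simp only [Matrix.cons_val_two, Matrix.cons_val_three, Matrix.tail_cons, Matrix.head_cons]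
  have h2 : ((Real.sqrt 2 : ℝ) : ℂ) ≠ 0 := by
    exact_mod_cast Real.sqrt_ne_zero'.mpr (by norm_num)
  have hsq : ((Real.sqrt 2 : ℝ) : ℂ) * ((Real.sqrt 2 : ℝ) : ℂ) = 2 := by
    exact_mod_cast Real.mul_self_sqrt (by norm_num : (2:ℝ) ≥ 0)
  cases b <;> simp [Complex.conj_ofReal, Matrix.cons_val_zero, Matrix.cons_val_one,
    Matrix.head_cons] <;> field_simp <;> (try ring) <;> tauto
end
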